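/- A homomorphism of substitution algebras is the same as a homomorphism of the associated abstract clones: for substitution algebras $(A,s,v)$, $(A',s',v')$ in $\mathrm{Set}^\mathbb{F}$ and a natural transformation $h: A\to A'$, $h$ commutes with $s,v$ (i.e., $h_m(s_m(t,u)) = s'_m(h_{m+1}(t),h_m(u))$ and $h_{m+1}(v_m)=v'_m$) if and only if $h$ commutes with the derived clone operations ($h_n(\mu_{m,n}(t,\vec u)) = \mu'_{m,n}(h_m(t), h_n\circ\vec u)$ and $h_m(\iota^m_i)=\iota'^m_i$). -/
import Mathlib


/-- Extension `f + id₁ : Fin (m+1) → Fin (n+1)` of `f : Fin m → Fin n`,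
sending the last element to the last element. -/
def ext {m n : ℕ} (f : Fin m → Fin n) : Fin (m+1) → Fin (n+1) :=
  Fin.lastCases (Fin.last n) (fun j => (f j).castSucc)

/-- The map `id_m + c : Fin (m+2) → Fin (m+1)` identifying the top two indices. -/
def contr (m : ℕ) : Fin (m+2) → Fin (m+1) :=
  Fin.lastCases (Fin.last m) (fun j => j)

/-- The map `id_m + s : Fin (m+2) → Fin (m+2)` swapping the top two indices. -/
def swap2 (m : ℕ) : Fin (m+2) → Fin (m+2) := fun i =>
  if _ : i.val = m then ⟨m+1, by omega⟩ else if _ : i.val = m+1 then ⟨m, by omega⟩ else i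

/-- A substitution algebra in the presheaf topos `Set^𝔽`, presented equationally. -/
structure SubstitutionAlgebra where
  A : ℕ → Type
  act : ∀ m n : ℕ, (Fin m → Fin n) → A m → A n
  act_id : ∀ (m : ℕ) (x : A m), act m m id x = x
  act_comp : ∀ (l m n : ℕ) (g : Fin l → Fin m) (f : Fin m → Fin n) (x : A l),
    act l n (f ∘ g) x = act m n f (act l m g x)
  s : ∀ m : ℕ, A (m+1) → A m → A m
  v : ∀ m : ℕ, A (m+1)
  s_nat : ∀ (m n : ℕ) (f : Fin m → Fin n) (x : A (m+1)) (y : A m),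
    act m n f (s m x y) = s n (act (m+1) (n+1) (ext f) x) (act m n f y)
  v_nat : ∀ (m n : ℕ) (f : Fin m → Fin n), act (m+1) (n+1) (ext f) (v m) = v n
  unit_law : ∀ (m : ℕ) (x : A m), s m (v m) x = x
  contract_law : ∀ (m : ℕ) (x : A (m+2)), s (m+1) x (v m) = act (m+2) (m+1) (contr m) x
  weaken_law : ∀ (m : ℕ) (x : A m) (y : A m), s m (act m (m+1) Fin.castSucc x) y = x
  assoc_law : ∀ (m : ℕ) (x : A (m+2)) (y : A (m+1)) (z : A m),
    s m (s (m+1) x y) z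
      = s m (s (m+1) (act (m+2) (m+2) (swap2 m) x) (act m (m+1) Fin.castSucc z)) (s m y z)

/-- Iterated single-variable substitution `φ_{m,n} : A(n+m) × (A n)^m → A(n)`. -/
def phiGen (A : ℕ → Type) (act : ∀ m n : ℕ, (Fin m → Fin n) → A m → A n)
    (s : ∀ m : ℕ, A (m+1) → A m → A m) :
    (m n : ℕ) → A (n+m) → (Fin m → A n) → A n
  | 0, _, t, _ => t
  | m+1, n, t, u =>
    phiGen A act s m n
      (s (n+m) t (act n (n+m) (Fin.castLE (Nat.le_add_right n m)) (u (Fin.last m))))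
      (fun i => u i.castSucc)

/-- Simultaneous substitution `μ_{m,n} : A(m) × (A n)^m → A(n)` derived by
iterating single-variable substitution. -/
def muGen (A : ℕ → Type) (act : ∀ m n : ℕ, (Fin m → Fin n) → A m → A n)
    (s : ∀ m : ℕ, A (m+1) → A m → A m) (m n : ℕ) (t : A m) (u : Fin m → A n) : A n :=
  phiGen A act s m n (act m (n+m) (fun i => ⟨n + i.val, by omega⟩) t) u

/-- Derived projections `ι^m_i = A(0 ↦ i)(ν₀)`. -/
def iotaGen (A : ℕ → Type) (act : ∀ m n : ℕ, (Fin m → Fin n) → A m → A n)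
    (v : ∀ m : ℕ, A (m+1)) (m : ℕ) (i : Fin m) : A m :=
  act 1 m (fun _ => i) (v 0)

/-! ## Auxiliary definitions and lemmas -/

/-- The map `Fin (k+1) → Fin k` sending the last element to `j` and fixing the rest. -/
def lastTo {k : ℕ} (j : Fin k) : Fin (k+1) → Fin k :=
  Fin.lastCases j (fun i => i)

/-- The block map `[id, g] : Fin (n+m) → Fin n`. -/
def blk {m n : ℕ} (g : Fin m → Fin n) : Fin (n+m) → Fin n :=
  fun x => if h : x.val < n then ⟨x.val, h⟩ else g ⟨x.val - n, by omega⟩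

/-- The section `Fin (k+1) → Fin (k+2)` fixing small elements, last ↦ last. -/
def secMap (k : ℕ) : Fin (k+1) → Fin (k+2) :=
  Fin.lastCases (Fin.last (k+1)) (fun i => i.castSucc.castSucc)

lemma iota_act (S : SubstitutionAlgebra) (k n : ℕ) (f : Fin k → Fin n) (j : Fin k) :
    S.act k n f (iotaGen S.A S.act S.v k j) = iotaGen S.A S.act S.v n (f j) := by
  unfold iotaGen
  rw [← S.act_comp]
  rfl

lemma v_eq_iota (S : SubstitutionAlgebra) (m : ℕ) :
    S.v m = iotaGen S.A S.act S.v (m+1) (Fin.last m) := by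
  unfold iotaGen
  have h1 : (fun _ : Fin 1 => Fin.last m) = ext (Fin.elim0 (α := Fin m)) := by
    funext i
    have : i = Fin.last 0 := Subsingleton.elim _ _
    subst this
    unfold ext
    rw [Fin.lastCases_last]
  rw [h1, S.v_nat 0 m Fin.elim0]

lemma subst_iota (S : SubstitutionAlgebra) (k : ℕ) (j : Fin k) (T : S.A (k+1)) :
    S.s k T (iotaGen S.A S.act S.v k j) = S.act (k+1) k (lastTo j) T := by
  have hsec : ext (lastTo j) ∘ secMap k = id := by
    funext x
    cases x using Fin.lastCases with
    | last => simp [ext, secMap, lastTo]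
    | cast a => simp [ext, secMap, lastTo]
  have hT : S.act (k+2) (k+1) (ext (lastTo j)) (S.act (k+1) (k+2) (secMap k) T) = T := by
    rw [← S.act_comp, hsec, S.act_id]
  have hv0 : S.act (k+1) k (lastTo j) (S.v k) = iotaGen S.A S.act S.v k j := by
    rw [v_eq_iota S k, iota_act]
    congr 1
    simp [lastTo]
  calc S.s k T (iotaGen S.A S.act S.v k j)
      = S.s k (S.act (k+2) (k+1) (ext (lastTo j)) (S.act (k+1) (k+2) (secMap k) T))
          (S.act (k+1) k (lastTo j) (S.v k)) := by rw [hT, hv0]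
    _ = S.act (k+1) k (lastTo j) (S.s (k+1) (S.act (k+1) (k+2) (secMap k) T) (S.v k)) :=
        (S.s_nat (k+1) k (lastTo j) _ _).symm
    _ = S.act (k+1) k (lastTo j) (S.act (k+2) (k+1) (contr k) (S.act (k+1) (k+2) (secMap k) T)) := by
        rw [S.contract_law]
    _ = S.act (k+1) k (lastTo j) T := by
        rw [← S.act_comp, ← S.act_comp]
        congr 1
        funext x
        cases x using Fin.lastCases with
        | last => simp [lastTo, contr, secMap]
        | cast a => simp [lastTo, contr, secMap]

lemma phi_iota (S : SubstitutionAlgebra) :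
    ∀ (m n : ℕ) (g : Fin m → Fin n) (T : S.A (n+m)) (u : Fin m → S.A n),
    (∀ i, u i = iotaGen S.A S.act S.v n (g i)) →
    phiGen S.A S.act S.s m n T u = S.act (n+m) n (blk g) T := by
  intro m
  induction m with
  | zero =>
    intro n g T u _
    have hb : blk g = id := by
      funext x
      simp [blk, x.isLt]
    show T = S.act n n (blk g) T
    rw [hb, S.act_id]
  | succ m ih =>
    intro n g T u hu
    show phiGen S.A S.act S.s m n
        (S.s (n+m) T (S.act n (n+m) (Fin.castLE (Nat.le_add_right n m)) (u (Fin.last m))))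
        (fun i => u i.castSucc) = S.act (n+(m+1)) n (blk g) T
    rw [hu (Fin.last m), iota_act, subst_iota,
      ih n (fun i => g i.castSucc) _ _ (fun i => hu i.castSucc), ← S.act_comp]
    congr 1
    funext x
    cases x using Fin.lastCases with
    | last =>
      simp only [Function.comp_apply, lastTo, Fin.lastCases_last]
      unfold blk
      rw [dif_pos (show (Fin.castLE (Nat.le_add_right n m) (g (Fin.last m))).val < n by
            simp),
        dif_neg (show ¬ ((Fin.last (n+m)).val < n) by simp only [Fin.val_last]; omega)]
      trans (g (Fin.last m))
      · apply Fin.ext; simp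
      · congr 1
        apply Fin.ext
        simp only [Fin.val_last]
        omega
    | cast a =>
      simp only [Function.comp_apply, lastTo, Fin.lastCases_castSucc]
      unfold blk
      by_cases hn : a.val < n
      · rw [dif_pos hn, dif_pos (by simpa using hn)]
        apply Fin.ext
        simp
      · rw [dif_neg hn, dif_neg (by simpa using hn)]
        congr 1

lemma s_eq_mu (S : SubstitutionAlgebra) (m : ℕ) (t : S.A (m+1)) (u : S.A m) :
    S.s m t u = muGen S.A S.act S.s (m+1) m t
      (Fin.lastCases u (fun i => iotaGen S.A S.act S.v m i)) := by
  have h1 : ext (blk (fun i : Fin m => i)) ∘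
      (fun i : Fin (m+1) => (⟨m + i.val, by omega⟩ : Fin (m+m+1))) = id := by
    funext x
    cases x using Fin.lastCases with
    | last =>
      simp only [Function.comp_apply, ext, Fin.val_last, id_eq]
      rw [show (⟨m + m, by omega⟩ : Fin (m+m+1)) = Fin.last (m+m) from rfl,
        Fin.lastCases_last]
    | cast a =>
      simp only [Function.comp_apply, ext, Fin.coe_castSucc, id_eq]
      rw [show (⟨m + a.val, by omega⟩ : Fin (m+m+1))
          = Fin.castSucc ⟨m + a.val, by omega⟩ from rfl, Fin.lastCases_castSucc]
      apply Fin.ext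
      simp [blk, show ¬ (m + a.val < m) by omega]
  have h2 : blk (fun i : Fin m => i) ∘ Fin.castLE (Nat.le_add_right m m) = id := by
    funext x
    apply Fin.ext
    simp [blk, x.isLt]
  have ht : S.act (m+m+1) (m+1) (ext (blk (fun i : Fin m => i)))
      (S.act (m+1) (m+m+1) (fun i => ⟨m + i.val, by omega⟩) t) = t := by
    rw [← S.act_comp, h1, S.act_id]
  have hu' : S.act (m+m) m (blk (fun i : Fin m => i))
      (S.act m (m+m) (Fin.castLE (Nat.le_add_right m m)) u) = u := by
    rw [← S.act_comp, h2, S.act_id]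
  unfold muGen
  rw [show phiGen S.A S.act S.s (m+1) m
      (S.act (m+1) (m+(m+1)) (fun i => ⟨m + i.val, by omega⟩) t)
      (Fin.lastCases u (fun i => iotaGen S.A S.act S.v m i))
    = phiGen S.A S.act S.s m m
      (S.s (m+m) (S.act (m+1) (m+(m+1)) (fun i => ⟨m + i.val, by omega⟩) t)
        (S.act m (m+m) (Fin.castLE (Nat.le_add_right m m))
          (Fin.lastCases (motive := fun _ => S.A m) u
            (fun i => iotaGen S.A S.act S.v m i) (Fin.last m))))
      (fun i => Fin.lastCases (motive := fun _ => S.A m) u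
        (fun i => iotaGen S.A S.act S.v m i) i.castSucc)
    from rfl]
  rw [phi_iota S m m (fun i => i) _ _ (fun i => by simp)]
  simp only [Fin.lastCases_last]
  conv_lhs => rw [← ht, ← hu']
  exact (S.s_nat (m+m) m (blk (fun i : Fin m => i)) _ _).symm
/-- A natural transformation between substitution algebras commutes with the
substitution-algebra operations if and only if it commutes with the derived
clone operations. -/
theorem subalg_hom_iff_clone_hom (S S' : SubstitutionAlgebra)
    (h : ∀ m : ℕ, S.A m → S'.A m)
    (hnat : ∀ (m n : ℕ) (f : Fin m → Fin n) (x : S.A m),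
      h n (S.act m n f x) = S'.act m n f (h m x)) :
    ((∀ (m : ℕ) (t : S.A (m+1)) (u : S.A m),
        h m (S.s m t u) = S'.s m (h (m+1) t) (h m u)) ∧
     (∀ m : ℕ, h (m+1) (S.v m) = S'.v m))
    ↔
    ((∀ (m n : ℕ) (t : S.A m) (u : Fin m → S.A n),
        h n (muGen S.A S.act S.s m n t u)
          = muGen S'.A S'.act S'.s m n (h m t) (fun i => h n (u i))) ∧
     (∀ (m : ℕ) (i : Fin m),
        h m (iotaGen S.A S.act S.v m i) = iotaGen S'.A S'.act S'.v m i)) := by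
  constructor
  · rintro ⟨hs, hv⟩
    have hphi : ∀ (m n : ℕ) (T : S.A (n+m)) (u : Fin m → S.A n),
        h n (phiGen S.A S.act S.s m n T u)
          = phiGen S'.A S'.act S'.s m n (h (n+m) T) (fun i => h n (u i)) := by
      intro m
      induction m with
      | zero => intro n T u; rfl
      | succ m ih =>
        intro n T u
        show h n (phiGen S.A S.act S.s m n
            (S.s (n+m) T (S.act n (n+m) (Fin.castLE (Nat.le_add_right n m)) (u (Fin.last m))))
            (fun i => u i.castSucc)) = _
        rw [ih, hs, hnat]
        rfl
    refine ⟨fun m n t u => ?_, fun m i => ?_⟩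
    · unfold muGen
      rw [hphi, hnat]
    · unfold iotaGen
      rw [hnat, hv 0]
  · rintro ⟨hmu, hiota⟩
    constructor
    · intro m t u
      have key := hmu (m+1) m t (Fin.lastCases u (fun i => iotaGen S.A S.act S.v m i))
      rw [← s_eq_mu] at key
      rw [key]
      rw [show (fun i : Fin (m+1) => h m (Fin.lastCases (motive := fun _ => S.A m) u
            (fun i => iotaGen S.A S.act S.v m i) i))
          = Fin.lastCases (h m u) (fun i => iotaGen S'.A S'.act S'.v m i) from
        funext fun i => by
          cases i using Fin.lastCases with
          | last => simp
          | cast a => simp [hiota m a]]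
      exact (s_eq_mu S' m (h (m+1) t) (h m u)).symm
    · intro m
      rw [v_eq_iota S m, hiota (m+1) (Fin.last m), ← v_eq_iota S' m]
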